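/- arXiv:1004.0761 — 4 statements merged into one kernel-verified Lean document; each statement's English description precedes it below -/
import Mathlib

section
/- Let n ≥ 1 be an integer, β < 0 a real number with |n + β| ≥ 1 and n + β + 1 ≥ 0, σ > 0, and l ≥ 1 an integer. Define ξ*(c) = (cσ + √(c²σ² + 4σ(n+β+1)))/4 and MN(c) = c^{(β−n+1−4l)/4} · ( ξ*(c)^{(n+β+1)/2} · exp(c·ξ*(c) − ξ*(c)²/σ) )^{1/2} for c > 0. Then MN(c) → ∞ as c → ∞. -/
set_option maxHeartbeats 1000000 in
/-- Case 1 (β < 0): the MN function tends to `∞` as `c → ∞`. -/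
theorem MN_case1_tendsto_atTop (n : ℕ) (hn : 1 ≤ n) (β : ℝ) (hβ : β < 0)
    (hnb : |(n : ℝ) + β| ≥ 1) (hnb1 : (n : ℝ) + β + 1 ≥ 0) (σ : ℝ) (hσ : 0 < σ)
    (l : ℕ) (hl : 1 ≤ l)
    (ξstar : ℝ → ℝ)
    (hξ : ∀ c : ℝ, ξstar c =
      (c * σ + Real.sqrt (c ^ 2 * σ ^ 2 + 4 * σ * ((n : ℝ) + β + 1))) / 4)
    (MN : ℝ → ℝ)
    (hMN : ∀ c : ℝ, MN c =
      c ^ ((β - n + 1 - 4 * l) / 4) *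
        ((ξstar c) ^ (((n : ℝ) + β + 1) / 2) *
          Real.exp (c * ξstar c - (ξstar c) ^ 2 / σ)) ^ ((1 : ℝ) / 2)) :
    Filter.Tendsto MN Filter.atTop Filter.atTop := by
  set A : ℝ := (n : ℝ) + β + 1 with hAdef
  have hA0 : 0 ≤ A := hnb1
  set p : ℝ := (β - n + 1 - 4 * l) / 4 with hpdef
  have hn1 : (1:ℝ) ≤ (n:ℝ) := by exact_mod_cast hn
  have hl1 : (1:ℝ) ≤ (l:ℝ) := by exact_mod_cast hl
  have hp0 : p < 0 := by
    have : β - (n:ℝ) + 1 - 4 * l < 0 := by nlinarith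
    have := div_neg_of_neg_of_pos this (by norm_num : (0:ℝ) < 4)
    simpa [hpdef] using this
  apply Filter.tendsto_atTop_mono' Filter.atTop _ Real.tendsto_exp_atTop
  refine Filter.eventually_atTop.mpr ⟨max (max (2 * Real.sqrt (σ * A) / σ) (2 / σ)) (max 1 (16 * (1 - p) / σ)),
    fun c hc => ?_⟩
  have hc1 : 2 * Real.sqrt (σ * A) / σ ≤ c := le_trans (le_max_left _ _) (le_trans (le_max_left _ _) hc)
  have hc2 : 2 / σ ≤ c := le_trans (le_max_right _ _) (le_trans (le_max_left _ _) hc)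
  have hc3 : (1:ℝ) ≤ c := le_trans (le_max_left _ _) (le_trans (le_max_right _ _) hc)
  have hc4 : 16 * (1 - p) / σ ≤ c := le_trans (le_max_right _ _) (le_trans (le_max_right _ _) hc)
  have hc0 : 0 < c := lt_of_lt_of_le one_pos hc3
  have hcσ1 : 2 * Real.sqrt (σ * A) ≤ c * σ := by
    rw [div_le_iff₀ hσ] at hc1; linarith
  have hcσ2 : 2 ≤ c * σ := by rw [div_le_iff₀ hσ] at hc2; linarith
  have hcσ4 : 16 * (1 - p) ≤ c * σ := by rw [div_le_iff₀ hσ] at hc4; linarith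
  set s : ℝ := Real.sqrt (c ^ 2 * σ ^ 2 + 4 * σ * A) with hsdef
  have hs0 : 0 ≤ s := Real.sqrt_nonneg _
  have hssq : s ^ 2 = c ^ 2 * σ ^ 2 + 4 * σ * A :=
    Real.sq_sqrt (by positivity)
  have hs1 : c * σ ≤ s := by nlinarith [hssq, hs0, mul_pos hc0 hσ]
  have hrA0 : 0 ≤ Real.sqrt (σ * A) := Real.sqrt_nonneg _
  have hrAsq : Real.sqrt (σ * A) ^ 2 = σ * A := Real.sq_sqrt (by positivity)
  have hs2 : s ≤ c * σ + 2 * Real.sqrt (σ * A) := by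
    have h := Real.sqrt_le_sqrt
      (show c ^ 2 * σ ^ 2 + 4 * σ * A ≤ (c * σ + 2 * Real.sqrt (σ * A)) ^ 2 by
        nlinarith [mul_nonneg (mul_pos hc0 hσ).le hrA0])
    rwa [Real.sqrt_sq (by positivity)] at h
  have hs2' : s ≤ 2 * (c * σ) := by linarith
  have hξc : ξstar c = (c * σ + s) / 4 := hξ c
  have hξ1 : (1:ℝ) ≤ ξstar c := by
    rw [hξc]; linarith
  have hexp : c * ξstar c - (ξstar c) ^ 2 / σ = (c * σ + s) * (3 * (c * σ) - s) / (16 * σ) := by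
    rw [hξc]; field_simp; ring
  have hElb : c ^ 2 * σ / 8 ≤ c * ξstar c - (ξstar c) ^ 2 / σ := by
    have hss : s * s ≤ 2 * (c * σ) * s := mul_le_mul_of_nonneg_right hs2' hs0
    rw [hexp, le_div_iff₀ (by positivity)]
    nlinarith [hss, sq_nonneg (c * σ)]
  set E : ℝ := c * ξstar c - (ξstar c) ^ 2 / σ with hEdef
  have h1le : (1:ℝ) ≤ (ξstar c) ^ (A / 2) :=
    Real.one_le_rpow hξ1 (by positivity)
  have hbr1 : Real.exp E ≤ (ξstar c) ^ (A / 2) * Real.exp E :=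
    le_mul_of_one_le_left (Real.exp_pos _).le h1le
  have hbr2 : (Real.exp E) ^ ((1:ℝ)/2) ≤ ((ξstar c) ^ (A / 2) * Real.exp E) ^ ((1:ℝ)/2) :=
    Real.rpow_le_rpow (Real.exp_pos _).le hbr1 (by norm_num)
  have hbr3 : (Real.exp E) ^ ((1:ℝ)/2) = Real.exp (E / 2) := by
    rw [← Real.exp_mul]; ring_nf
  have hbr4 : Real.exp (c ^ 2 * σ / 16) ≤ ((ξstar c) ^ (A / 2) * Real.exp E) ^ ((1:ℝ)/2) := by
    refine le_trans ?_ hbr2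
    rw [hbr3]
    exact Real.exp_le_exp.mpr (by linarith)
  have hcp : (0:ℝ) < c ^ p := Real.rpow_pos_of_pos hc0 p
  have hMNge : c ^ p * Real.exp (c ^ 2 * σ / 16) ≤ MN c := by
    rw [hMN c]
    exact mul_le_mul_of_nonneg_left hbr4 hcp.le
  have hcp_eq : c ^ p = Real.exp (Real.log c * p) := by
    rw [Real.rpow_def_of_pos hc0]
  have hlogc : Real.log c ≤ c := (Real.log_le_sub_one_of_pos hc0).trans (by linarith)
  have hlog0 : 0 ≤ Real.log c := Real.log_nonneg hc3
  have hfinal : c ≤ Real.log c * p + c ^ 2 * σ / 16 := by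
    have h1 : c * p ≤ Real.log c * p := mul_le_mul_of_nonpos_right hlogc hp0.le
    nlinarith
  calc Real.exp c ≤ Real.exp (Real.log c * p + c ^ 2 * σ / 16) := Real.exp_le_exp.mpr hfinal
    _ = c ^ p * Real.exp (c ^ 2 * σ / 16) := by rw [Real.exp_add, hcp_eq]
    _ ≤ MN c := hMNge
end

section
/- Let n ≥ 1 be an integer, β < 0 a real number with |n + β| ≥ 1 and n + β + 1 > 0, σ > 0, and l ≥ 1 an integer. Define ξ*(c) = (cσ + √(c²σ² + 4σ(n+β+1)))/4 and MN(c) = c^{(β−n+1−4l)/4} · ( ξ*(c)^{(n+β+1)/2} · exp(c·ξ*(c) − ξ*(c)²/σ) )^{1/2} for c > 0. Then MN attains a global minimum on (0, ∞); that is, there exists c₀ > 0 with MN(c₀) ≤ MN(c) for all c > 0. -/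
set_option maxHeartbeats 1000000

open Real Filter Set

private lemma mn_aux_quad (c σ x : ℝ)
    (h1 : 0 ≤ (x - c * σ / 2) * (5 * c * σ / 8 - x))
    (h2 : c * σ * x ≤ c * σ * (5 * c * σ / 8)) :
    c ^ 2 * σ ^ 2 / 8 ≤ c * x * σ - x ^ 2 := by nlinarith

/-- Case 1 (β < 0, n + β + 1 > 0): the MN function attains a global minimum on `(0, ∞)`. -/
theorem MN_case1_attains_min (n : ℕ) (hn : 1 ≤ n) (β : ℝ) (hβ : β < 0)
    (hnb : |(n : ℝ) + β| ≥ 1) (hnb1 : (n : ℝ) + β + 1 > 0) (σ : ℝ) (hσ : 0 < σ)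
    (l : ℕ) (hl : 1 ≤ l)
    (ξstar : ℝ → ℝ)
    (hξ : ∀ c : ℝ, ξstar c =
      (c * σ + Real.sqrt (c ^ 2 * σ ^ 2 + 4 * σ * ((n : ℝ) + β + 1))) / 4)
    (MN : ℝ → ℝ)
    (hMN : ∀ c : ℝ, MN c =
      c ^ ((β - n + 1 - 4 * l) / 4) *
        ((ξstar c) ^ (((n : ℝ) + β + 1) / 2) *
          Real.exp (c * ξstar c - (ξstar c) ^ 2 / σ)) ^ ((1 : ℝ) / 2)) :
    ∃ c₀ : ℝ, 0 < c₀ ∧ ∀ c : ℝ, 0 < c → MN c₀ ≤ MN c := by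
  set A : ℝ := (n : ℝ) + β + 1 with hAdef
  set p : ℝ := (β - n + 1 - 4 * l) / 4 with hpdef
  set q : ℝ := A / 2 with hqdef
  have hA0 : 0 < A := hnb1
  have hn1 : (1 : ℝ) ≤ n := by exact_mod_cast hn
  have hl1 : (1 : ℝ) ≤ l := by exact_mod_cast hl
  have hp0 : p < 0 := by
    rw [hpdef]
    apply div_neg_of_neg_of_pos _ (by norm_num)
    linarith
  have hq0 : 0 < q := by rw [hqdef]; positivity
  -- lower bound ξ0 for ξstar
  set ξ0 : ℝ := Real.sqrt (4 * σ * A) / 4 with hξ0def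
  have hξ00 : 0 < ξ0 := by
    rw [hξ0def]
    have : 0 < 4 * σ * A := by positivity
    positivity
  have hξlb : ∀ c : ℝ, 0 ≤ c → ξ0 ≤ ξstar c := by
    intro c hc
    rw [hξ c, hξ0def]
    have h1 : Real.sqrt (4 * σ * A) ≤ Real.sqrt (c ^ 2 * σ ^ 2 + 4 * σ * A) :=
      Real.sqrt_le_sqrt (by nlinarith)
    have h2 : 0 ≤ c * σ := by positivity
    linarith
  have hξpos : ∀ c : ℝ, 0 ≤ c → 0 < ξstar c := fun c hc => lt_of_lt_of_le hξ00 (hξlb c hc)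
  have hξlb2 : ∀ c : ℝ, 0 ≤ c → c * σ / 2 ≤ ξstar c := by
    intro c hc
    rw [hξ c]
    have h1 : c * σ ≤ Real.sqrt (c ^ 2 * σ ^ 2 + 4 * σ * A) := by
      have h2 : c * σ = Real.sqrt ((c * σ) ^ 2) := (Real.sqrt_sq (by positivity)).symm
      rw [h2]
      exact Real.sqrt_le_sqrt (by nlinarith)
    linarith
  -- upper bound for ξstar
  set B : ℝ := 2 * Real.sqrt (σ * A) with hBdef
  have hB0 : 0 ≤ B := by rw [hBdef]; positivity
  have hB2 : B ^ 2 = 4 * (σ * A) := by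
    rw [hBdef, mul_pow, Real.sq_sqrt (by positivity : (0:ℝ) ≤ σ * A)]; ring
  have hξub : ∀ c : ℝ, 0 ≤ c → ξstar c ≤ (2 * c * σ + B) / 4 := by
    intro c hc
    rw [hξ c]
    have h1 : Real.sqrt (c ^ 2 * σ ^ 2 + 4 * σ * A) ≤ c * σ + B := by
      have h2 : c ^ 2 * σ ^ 2 + 4 * σ * A ≤ (c * σ + B) ^ 2 := by nlinarith [mul_nonneg (mul_nonneg hc hσ.le) hB0]
      calc Real.sqrt (c ^ 2 * σ ^ 2 + 4 * σ * A) ≤ Real.sqrt ((c * σ + B) ^ 2) :=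
            Real.sqrt_le_sqrt h2
        _ = c * σ + B := Real.sqrt_sq (by positivity)
    linarith
  -- generic lower bound for MN
  have hMNlb : ∀ c : ℝ, 0 < c → ∀ m : ℝ, m ≤ c * ξstar c - (ξstar c) ^ 2 / σ →
      c ^ p * (ξ0 ^ q * Real.exp m) ^ ((1 : ℝ) / 2) ≤ MN c := by
    intro c hc m hm
    rw [hMN c]
    have h1 : ξ0 ^ q ≤ (ξstar c) ^ q := Real.rpow_le_rpow hξ00.le (hξlb c hc.le) hq0.le
    have h3 : ξ0 ^ q * Real.exp m ≤ (ξstar c) ^ q * Real.exp (c * ξstar c - (ξstar c) ^ 2 / σ) :=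
      mul_le_mul h1 (Real.exp_le_exp.mpr hm) (Real.exp_pos m).le
        (Real.rpow_nonneg (hξpos c hc.le).le q)
    have h4 := Real.rpow_le_rpow (by positivity) h3 (by norm_num : (0:ℝ) ≤ 1/2)
    exact mul_le_mul_of_nonneg_left h4 (Real.rpow_nonneg hc.le p)
  -- small c lower bound
  set ξ1 : ℝ := (2 * σ + B) / 4 with hξ1def
  have hξ10 : 0 ≤ ξ1 := by rw [hξ1def]; positivity
  set L : ℝ := (ξ0 ^ q * Real.exp (-(ξ1 ^ 2) / σ)) ^ ((1 : ℝ) / 2) with hLdef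
  have hL : 0 < L := by
    rw [hLdef]
    exact Real.rpow_pos_of_pos (mul_pos (Real.rpow_pos_of_pos hξ00 q) (Real.exp_pos _)) _
  have hsmall : ∀ c : ℝ, 0 < c → c ≤ 1 → L * c ^ p ≤ MN c := by
    intro c hc hc1
    have hub : ξstar c ≤ ξ1 := by
      have := hξub c hc.le
      rw [hξ1def]
      nlinarith
    have h0 : 0 ≤ ξstar c := (hξpos c hc.le).le
    have harg : -(ξ1 ^ 2) / σ ≤ c * ξstar c - (ξstar c) ^ 2 / σ := by
      have h2 : (ξstar c) ^ 2 ≤ ξ1 ^ 2 := by nlinarith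
      have h3 : (ξstar c) ^ 2 / σ ≤ ξ1 ^ 2 / σ := by gcongr
      have h4 : 0 ≤ c * ξstar c := mul_nonneg hc.le h0
      have h5 : -(ξ1 ^ 2) / σ = -(ξ1 ^ 2 / σ) := by ring
      linarith [h5 ▸ le_refl (-(ξ1 ^ 2) / σ)]
    calc L * c ^ p = c ^ p * L := mul_comm _ _
      _ ≤ MN c := by rw [hLdef]; exact hMNlb c hc _ harg
  -- large c lower bound
  have hkey : ∀ c : ℝ, 2 * B / σ ≤ c → 1 ≤ c →
      c ^ 2 * σ / 8 ≤ c * ξstar c - (ξstar c) ^ 2 / σ := by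
    intro c hcB hc1
    have hc0 : (0:ℝ) ≤ c := by linarith
    have hBσ : 2 * B ≤ c * σ := by
      rw [div_le_iff₀ hσ] at hcB; linarith
    have hlb := hξlb2 c hc0
    have hub : ξstar c ≤ 5 * c * σ / 8 := by
      have := hξub c hc0; linarith
    set x : ℝ := ξstar c
    have h1 : 0 ≤ (x - c * σ / 2) * (5 * c * σ / 8 - x) :=
      mul_nonneg (by linarith) (by linarith)
    have h2 : c * σ * x ≤ c * σ * (5 * c * σ / 8) :=
      mul_le_mul_of_nonneg_left hub (by positivity)
    have hmain : c ^ 2 * σ ^ 2 / 8 ≤ c * x * σ - x ^ 2 := mn_aux_quad c σ x h1 h2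
    have e1 : c * x - x ^ 2 / σ = (c * x * σ - x ^ 2) / σ := by field_simp
    have e2 : c ^ 2 * σ / 8 = (c ^ 2 * σ ^ 2 / 8) / σ := by field_simp
    rw [e1, e2]
    exact div_le_div_of_nonneg_right hmain hσ.le
  set K : ℝ := ξ0 ^ (q / 2) with hKdef
  have hK : 0 < K := Real.rpow_pos_of_pos hξ00 _
  have hsplit : ∀ m : ℝ, (ξ0 ^ q * Real.exp m) ^ ((1:ℝ)/2) = K * Real.exp (m / 2) := by
    intro m
    rw [Real.mul_rpow (Real.rpow_nonneg hξ00.le q) (Real.exp_pos m).le]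
    congr 1
    · rw [hKdef, ← Real.rpow_mul hξ00.le, mul_one_div]
    · rw [← Real.exp_mul, mul_one_div]
  have hlarge : ∀ c : ℝ, max 1 (2 * B / σ) ≤ c →
      K * (c ^ p * Real.exp (c ^ 2 * σ / 16)) ≤ MN c := by
    intro c hc
    have hc1 : 1 ≤ c := le_trans (le_max_left _ _) hc
    have hcB : 2 * B / σ ≤ c := le_trans (le_max_right _ _) hc
    have hcpos : 0 < c := by linarith
    have h1 := hMNlb c hcpos (c ^ 2 * σ / 8) (hkey c hcB hc1)
    rw [hsplit] at h1
    have e : c ^ 2 * σ / 8 / 2 = c ^ 2 * σ / 16 := by ring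
    rw [e] at h1
    calc K * (c ^ p * Real.exp (c ^ 2 * σ / 16))
        = c ^ p * (K * Real.exp (c ^ 2 * σ / 16)) := by ring
      _ ≤ MN c := h1
  -- tendsto at 0⁺
  have htend0 : Tendsto (fun c : ℝ => L * c ^ p) (nhdsWithin 0 (Set.Ioi 0)) atTop := by
    have h2 : Tendsto (fun c : ℝ => (c⁻¹) ^ (-p)) (nhdsWithin 0 (Set.Ioi 0)) atTop :=
      (tendsto_rpow_atTop (by linarith : (0:ℝ) < -p)).comp tendsto_inv_nhdsGT_zero
    have h3 : Tendsto (fun c : ℝ => c ^ p) (nhdsWithin 0 (Set.Ioi 0)) atTop := by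
      refine h2.congr' ?_
      filter_upwards [self_mem_nhdsWithin] with c hc
      have hc0 : (0:ℝ) < c := hc
      rw [Real.inv_rpow hc0.le, Real.rpow_neg hc0.le, inv_inv]
    exact h3.const_mul_atTop hL
  have hev : ∀ᶠ c in nhdsWithin (0:ℝ) (Set.Ioi 0), MN 1 ≤ MN c := by
    filter_upwards [htend0.eventually_ge_atTop (MN 1),
      Ioo_mem_nhdsGT_of_mem (by norm_num : (0:ℝ) ∈ Set.Ico (0:ℝ) 1)] with c h1 h2
    exact le_trans h1 (hsmall c h2.1 h2.2.le)
  obtain ⟨u, hu0, hu⟩ := mem_nhdsGT_iff_exists_Ioo_subset.mp hev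
  have hu0' : (0:ℝ) < u := hu0
  -- tendsto at ∞
  have hbase : Tendsto (fun c : ℝ => c ^ p * Real.exp (c ^ 2 * σ / 16)) atTop atTop := by
    set s : ℝ := -p / 2 with hsdef
    have hs : 0 < s := by rw [hsdef]; linarith
    have h1 := tendsto_exp_div_rpow_atTop s
    have h2 : Tendsto (fun c : ℝ => c ^ 2 * σ / 16) atTop atTop := by
      apply Tendsto.atTop_div_const (by norm_num : (0:ℝ) < 16)
      exact (tendsto_pow_atTop (two_ne_zero)).atTop_mul_const hσ
    have h3 := h1.comp h2
    have h4 : Tendsto (fun c : ℝ =>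
        (σ / 16) ^ s * (Real.exp (c ^ 2 * σ / 16) / (c ^ 2 * σ / 16) ^ s)) atTop atTop :=
      h3.const_mul_atTop (Real.rpow_pos_of_pos (by positivity) s)
    refine h4.congr' ?_
    filter_upwards [eventually_gt_atTop (0:ℝ)] with c hc
    have hcs : (c ^ 2 * σ / 16) ^ s = (c ^ p)⁻¹ * (σ / 16) ^ s := by
      rw [show c ^ 2 * σ / 16 = c ^ 2 * (σ / 16) by ring,
        Real.mul_rpow (by positivity) (by positivity)]
      congr 1
      rw [← Real.rpow_natCast c 2, ← Real.rpow_mul hc.le, ← Real.rpow_neg hc.le]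
      congr 1
      rw [hsdef]; push_cast; ring
    rw [hcs]
    have hcp : c ^ p ≠ 0 := (Real.rpow_pos_of_pos hc p).ne'
    have hσs : (σ / 16 : ℝ) ^ s ≠ 0 := (Real.rpow_pos_of_pos (by positivity) s).ne'
    field_simp
  have htop : Tendsto (fun c : ℝ => K * (c ^ p * Real.exp (c ^ 2 * σ / 16))) atTop atTop :=
    hbase.const_mul_atTop hK
  obtain ⟨b, hb⟩ := eventually_atTop.mp (htop.eventually_ge_atTop (MN 1))
  -- assemble
  set a' : ℝ := min (u / 2) 1 with ha'def
  have ha'pos : 0 < a' := by rw [ha'def]; exact lt_min (by linarith) one_pos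
  have ha'le1 : a' ≤ 1 := min_le_right _ _
  set b' : ℝ := max b (max 1 (2 * B / σ)) with hb'def
  have hb'ge1 : 1 ≤ b' := le_trans (le_max_left _ _) (le_max_right _ _)
  have hlarge' : ∀ c : ℝ, b' ≤ c → MN 1 ≤ MN c := by
    intro c hc
    have hcb : b ≤ c := le_trans (le_max_left _ _) hc
    have hcm : max 1 (2 * B / σ) ≤ c := le_trans (le_max_right _ _) hc
    exact le_trans (hb c hcb) (hlarge c hcm)
  have hsmall' : ∀ c : ℝ, 0 < c → c < a' → MN 1 ≤ MN c := by
    intro c hc hca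
    have : c ∈ Set.Ioo (0:ℝ) u := ⟨hc, by
      have := lt_of_lt_of_le hca (min_le_left (u/2) 1); linarith⟩
    exact hu this
  -- continuity of MN on Ioi 0
  have hξcont : Continuous ξstar := by
    have : ξstar = fun c => (c * σ + Real.sqrt (c ^ 2 * σ ^ 2 + 4 * σ * A)) / 4 := funext hξ
    rw [this]; fun_prop
  have hMNcont : ContinuousOn MN (Set.Ioi (0:ℝ)) := by
    have hMNeq : MN = fun c => c ^ p *
        ((ξstar c) ^ q * Real.exp (c * ξstar c - (ξstar c) ^ 2 / σ)) ^ ((1:ℝ)/2) := funext hMN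
    rw [hMNeq]
    apply ContinuousOn.mul
    · intro c hc
      exact (Real.continuousAt_rpow_const c p (Or.inl (ne_of_gt hc))).continuousWithinAt
    · apply ContinuousOn.rpow_const
      · apply ContinuousOn.mul
        · exact ContinuousOn.rpow_const hξcont.continuousOn
            (fun c hc => Or.inl (hξpos c (le_of_lt hc)).ne')
        · exact (Real.continuous_exp.comp
            (Continuous.sub (continuous_id.mul hξcont)
              ((hξcont.pow 2).div_const σ))).continuousOn
      · intro c hc
        exact Or.inr (by norm_num)
  have hne : (Set.Icc a' b').Nonempty := ⟨1, ha'le1, hb'ge1⟩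
  have hsub : Set.Icc a' b' ⊆ Set.Ioi (0:ℝ) := fun x hx => lt_of_lt_of_le ha'pos hx.1
  obtain ⟨c₀, hc₀mem, hc₀min⟩ := isCompact_Icc.exists_isMinOn hne (hMNcont.mono hsub)
  refine ⟨c₀, lt_of_lt_of_le ha'pos hc₀mem.1, ?_⟩
  intro c hc
  rcases le_or_gt a' c with h1 | h1
  · rcases le_or_gt c b' with h2 | h2
    · exact isMinOn_iff.mp hc₀min c ⟨h1, h2⟩
    · exact le_trans (isMinOn_iff.mp hc₀min 1 ⟨ha'le1, hb'ge1⟩) (hlarge' c h2.le)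
  · exact le_trans (isMinOn_iff.mp hc₀min 1 ⟨ha'le1, hb'ge1⟩) (hsmall' c hc h1)
end

section
/- Let σ > 0 and let l ≥ 1 be an integer. Define M(c) = exp(1 − 1/(c²σ)) for 0 < c ≤ 2/√(3σ) and M(c) = √(c·ξ*(c))·exp(c·ξ*(c) − ξ*(c)²/σ) with ξ*(c) = (cσ + √(c²σ² + 4σ))/4 for c > 2/√(3σ), and set MN(c) = c^{−1/2−l} · ( 1/ln 2 + 2√3·M(c) )^{1/2} for c > 0. Then MN attains a global minimum on (0, ∞); that is, there exists c₀ > 0 with MN(c₀) ≤ MN(c) for all c > 0. -/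
open Set Real

lemma M_contOn' (σ : ℝ) (hσ : 0 < σ)
    (ξstar : ℝ → ℝ)
    (hξ : ∀ c : ℝ, ξstar c = (c * σ + Real.sqrt (c ^ 2 * σ ^ 2 + 4 * σ)) / 4)
    (M : ℝ → ℝ)
    (hM1 : ∀ c : ℝ, 0 < c → c ≤ 2 / Real.sqrt (3 * σ) → M c = Real.exp (1 - 1 / (c ^ 2 * σ)))
    (hM2 : ∀ c : ℝ, 2 / Real.sqrt (3 * σ) < c →
      M c = Real.sqrt (c * ξstar c) * Real.exp (c * ξstar c - (ξstar c) ^ 2 / σ)) :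
    ContinuousOn M (Set.Ioi 0) := by
  set t : ℝ := 2 / Real.sqrt (3 * σ) with htdef
  have hs : 0 < Real.sqrt (3 * σ) := Real.sqrt_pos.mpr (by linarith)
  have hs2 : Real.sqrt (3 * σ) ^ 2 = 3 * σ := Real.sq_sqrt (by linarith)
  have ht : 0 < t := by positivity
  set f1 : ℝ → ℝ := fun c => Real.exp (1 - 1 / (c ^ 2 * σ)) with hf1def
  set f2 : ℝ → ℝ := fun c =>
      Real.sqrt (c * ((c * σ + Real.sqrt (c ^ 2 * σ ^ 2 + 4 * σ)) / 4)) *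
        Real.exp (c * ((c * σ + Real.sqrt (c ^ 2 * σ ^ 2 + 4 * σ)) / 4) -
          ((c * σ + Real.sqrt (c ^ 2 * σ ^ 2 + 4 * σ)) / 4) ^ 2 / σ) with hf2def
  have hMf2 : ∀ c : ℝ, t < c → M c = f2 c := by
    intro c hc
    rw [hM2 c hc, hξ c]
  have hf1c : ∀ c : ℝ, c ≠ 0 → ContinuousAt f1 c := by
    intro c hc
    apply Real.continuous_exp.continuousAt.comp
    apply ContinuousAt.sub continuousAt_const
    apply ContinuousAt.div continuousAt_const (by fun_prop)
    positivity
  have hf2c : Continuous f2 := by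
    apply Continuous.mul
    · apply Real.continuous_sqrt.comp
      fun_prop
    · apply Real.continuous_exp.comp
      apply Continuous.sub (by fun_prop)
      apply Continuous.div (by fun_prop) continuous_const (fun _ => ne_of_gt hσ)
  -- junction equality
  have hjunction : f1 t = f2 t := by
    have hts : t * σ = 2 * Real.sqrt (3 * σ) / 3 := by
      rw [htdef, div_mul_eq_mul_div, div_eq_div_iff hs.ne' (by norm_num : (3:ℝ) ≠ 0)]
      nlinarith [hs2]
    have ht2 : t ^ 2 * σ = 4 / 3 := by
      rw [htdef, div_pow, hs2]
      field_simp
      ring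
    have hbig : Real.sqrt (t ^ 2 * σ ^ 2 + 4 * σ) = 4 * Real.sqrt (3 * σ) / 3 := by
      have h : t ^ 2 * σ ^ 2 + 4 * σ = (4 * Real.sqrt (3 * σ) / 3) ^ 2 := by
        have : t ^ 2 * σ ^ 2 = (4/3) * σ := by nlinarith [ht2]
        rw [this]; nlinarith [hs2]
      rw [h, Real.sqrt_sq (by positivity)]
    have hξt : (t * σ + Real.sqrt (t ^ 2 * σ ^ 2 + 4 * σ)) / 4 = Real.sqrt (3 * σ) / 2 := by
      rw [hts, hbig]; ring
    have htξ : t * (Real.sqrt (3 * σ) / 2) = 1 := by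
      rw [htdef, div_mul_div_comm, mul_comm, div_self (by positivity)]
    have hξsq : (Real.sqrt (3 * σ) / 2) ^ 2 / σ = 3 / 4 := by
      rw [div_pow, hs2]; field_simp; ring
    simp only [hf1def, hf2def, hξt, htξ, hξsq, ht2]
    rw [Real.sqrt_one]
    norm_num
  -- now the continuity
  intro c hc
  rcases lt_trichotomy c t with hct | hct | hct
  · apply ((hf1c c (ne_of_gt hc)).continuousWithinAt).congr_of_eventuallyEq
    · filter_upwards [self_mem_nhdsWithin,
        mem_nhdsWithin_of_mem_nhds (isOpen_Iio.mem_nhds hct)] with x hx1 hx2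
      exact hM1 x hx1 (le_of_lt hx2)
    · exact hM1 c hc (le_of_lt hct)
  · -- c = t
    rw [hct]
    have hsplit : Set.Ioi (0:ℝ) = (Set.Ioc 0 t) ∪ (Set.Ioi t) := by
      ext x
      simp only [Set.mem_Ioi, Set.mem_union, Set.mem_Ioc]
      constructor
      · intro hx
        rcases le_or_gt x t with h | h
        · exact Or.inl ⟨hx, h⟩
        · exact Or.inr h
      · rintro (⟨h, _⟩ | h)
        · exact h
        · linarith
    rw [hsplit]
    apply ContinuousWithinAt.union
    · exact ((hf1c t (ne_of_gt ht)).continuousWithinAt).congr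
        (fun x hx => hM1 x hx.1 hx.2) (hM1 t ht le_rfl)
    · exact (hf2c.continuousAt.continuousWithinAt).congr
        (fun x hx => hMf2 x hx) (by rw [hM1 t ht le_rfl]; exact hjunction)
  · apply (hf2c.continuousAt.continuousWithinAt).congr_of_eventuallyEq
    · filter_upwards [mem_nhdsWithin_of_mem_nhds (isOpen_Ioi.mem_nhds hct)] with x hx
      exact hMf2 x hx
    · exact hMf2 c hct


set_option maxHeartbeats 2000000 in
/-- Case 2 (β = -1, n = 1): the MN function attains a global minimum on `(0, ∞)`. -/
theorem MN_case2_attains_min (σ : ℝ) (hσ : 0 < σ) (l : ℕ) (hl : 1 ≤ l)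
    (ξstar : ℝ → ℝ)
    (hξ : ∀ c : ℝ, ξstar c = (c * σ + Real.sqrt (c ^ 2 * σ ^ 2 + 4 * σ)) / 4)
    (M : ℝ → ℝ)
    (hM1 : ∀ c : ℝ, 0 < c → c ≤ 2 / Real.sqrt (3 * σ) → M c = Real.exp (1 - 1 / (c ^ 2 * σ)))
    (hM2 : ∀ c : ℝ, 2 / Real.sqrt (3 * σ) < c →
      M c = Real.sqrt (c * ξstar c) * Real.exp (c * ξstar c - (ξstar c) ^ 2 / σ))
    (MN : ℝ → ℝ)
    (hMN : ∀ c : ℝ, MN c =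
      c ^ (-(1 : ℝ) / 2 - l) * (1 / Real.log 2 + 2 * Real.sqrt 3 * M c) ^ ((1 : ℝ) / 2)) :
    ∃ c₀ : ℝ, 0 < c₀ ∧ ∀ c : ℝ, 0 < c → MN c₀ ≤ MN c := by
  have hlog : 0 < Real.log 2 := Real.log_pos (by norm_num)
  have hA : 0 < 1 / Real.log 2 := by positivity
  have hs : 0 < Real.sqrt (3 * σ) := Real.sqrt_pos.mpr (by linarith)
  set t : ℝ := 2 / Real.sqrt (3 * σ) with htdef
  have ht : 0 < t := by positivity
  have hl1 : (1:ℝ) ≤ (l:ℝ) := by exact_mod_cast hl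
  have hexp1 : -(1:ℝ)/2 - l ≤ -1 := by linarith
  have hB1 : (1:ℝ) ≤ 2 * Real.sqrt 3 := by
    have : (1:ℝ) ≤ Real.sqrt 3 := Real.one_le_sqrt.mpr (by norm_num)
    linarith
  -- M is nonnegative on the positive axis
  have hMpos : ∀ c : ℝ, 0 < c → 0 ≤ M c := by
    intro c hc
    rcases le_or_gt c t with h | h
    · rw [hM1 c hc h]; positivity
    · rw [hM2 c h]; positivity
  have hXpos : ∀ c : ℝ, 0 < c → 0 < 1 / Real.log 2 + 2 * Real.sqrt 3 * M c := by
    intro c hc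
    have h1 : 0 ≤ 2 * Real.sqrt 3 * M c :=
      mul_nonneg (by positivity) (hMpos c hc)
    linarith
  -- continuity of MN on (0, ∞)
  have hcM : ContinuousOn M (Set.Ioi 0) := M_contOn' σ hσ ξstar hξ M hM1 hM2
  have hcMN : ContinuousOn MN (Set.Ioi 0) := by
    apply ContinuousOn.congr (f := fun c : ℝ =>
      c ^ (-(1 : ℝ) / 2 - l) * (1 / Real.log 2 + 2 * Real.sqrt 3 * M c) ^ ((1 : ℝ) / 2))
    · apply ContinuousOn.mul
      · exact ContinuousOn.rpow_const continuousOn_id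
          (fun x hx => Or.inl (ne_of_gt hx))
      · exact ContinuousOn.rpow_const
          (continuousOn_const.add (continuousOn_const.mul hcM))
          (fun x hx => Or.inr (by norm_num))
    · intro c _; exact hMN c
  -- the reference value
  set V : ℝ := MN t with hVdef
  have hV : 0 < V := by
    rw [hVdef, hMN t]
    exact mul_pos (Real.rpow_pos_of_pos ht _) (Real.rpow_pos_of_pos (hXpos t ht) _)
  -- uniform lower bound for MN
  have hlow : ∀ c : ℝ, 0 < c →
      c ^ (-(1:ℝ)/2 - l) * (1 / Real.log 2) ^ ((1:ℝ)/2) ≤ MN c := by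
    intro c hc
    rw [hMN c]
    apply mul_le_mul_of_nonneg_left _ (Real.rpow_nonneg hc.le _)
    apply Real.rpow_le_rpow hA.le _ (by norm_num)
    have : 0 ≤ 2 * Real.sqrt 3 * M c := mul_nonneg (by positivity) (hMpos c hc)
    linarith
  -- the small-c bound
  set K : ℝ := (1 / Real.log 2) ^ ((1:ℝ)/2) with hKdef
  have hK : 0 < K := Real.rpow_pos_of_pos hA _
  set a : ℝ := min t (min 1 (K / V)) with hadef
  have ha : 0 < a := lt_min ht (lt_min one_pos (div_pos hK hV))
  have hat : a ≤ t := min_le_left _ _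
  have hsmall : ∀ c : ℝ, 0 < c → c ≤ a → V ≤ MN c := by
    intro c hc hca
    have hc1 : c ≤ 1 := le_trans hca (le_trans (min_le_right _ _) (min_le_left _ _))
    have hcK : c ≤ K / V := le_trans hca (le_trans (min_le_right _ _) (min_le_right _ _))
    have h1 : c ^ (-1:ℝ) ≤ c ^ (-(1:ℝ)/2 - l) :=
      Real.rpow_le_rpow_of_exponent_ge hc hc1 hexp1
    have h2 : c ^ (-1:ℝ) * K ≤ MN c :=
      le_trans (mul_le_mul_of_nonneg_right h1 hK.le) (hlow c hc)
    have h3 : V ≤ c ^ (-1:ℝ) * K := by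
      rw [Real.rpow_neg_one, inv_mul_eq_div, le_div_iff₀ hc]
      calc V * c ≤ V * (K / V) := by
            exact mul_le_mul_of_nonneg_left hcK hV.le
        _ = K := by field_simp
    linarith
  -- the large-c bound
  set n : ℕ := l + 1 with hndef
  have hn0 : 0 < (n:ℝ) := by positivity
  set b : ℝ := 1 + t + 2 / Real.sqrt σ + Real.sqrt (2/σ) + 16 * n / σ + 16 * n * V / σ
    with hbdef
  have hr : 0 < Real.sqrt σ := Real.sqrt_pos.mpr hσ
  have hr2 : Real.sqrt σ ^ 2 = σ := Real.sq_sqrt hσ.le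
  have hbterms : 0 ≤ Real.sqrt (2/σ) ∧ 0 ≤ 2 / Real.sqrt σ ∧ 0 ≤ 16 * (n:ℝ) / σ ∧
      0 ≤ 16 * n * V / σ := by
    refine ⟨Real.sqrt_nonneg _, by positivity, by positivity, by positivity⟩
  obtain ⟨hb1', hb2', hb3', hb4'⟩ := hbterms
  have hbt : t < b := by rw [hbdef]; linarith
  have hb1 : 1 ≤ b := by rw [hbdef]; linarith [ht.le]
  have hlarge : ∀ c : ℝ, b ≤ c → V ≤ MN c := by
    intro c hbc
    have hc1 : (1:ℝ) ≤ c := le_trans hb1 hbc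
    have hc0 : 0 < c := lt_of_lt_of_le one_pos hc1
    have htc : t < c := lt_of_lt_of_le hbt hbc
    have hcσ : 2 / Real.sqrt σ ≤ c := by rw [hbdef] at hbc; linarith [ht.le]
    have hcr : 2 ≤ c * Real.sqrt σ := by
      rw [div_le_iff₀ hr] at hcσ; linarith
    have hc2σ : Real.sqrt (2/σ) ≤ c := by rw [hbdef] at hbc; linarith [ht.le]
    have hc16 : 16 * (n:ℝ) / σ ≤ c := by rw [hbdef] at hbc; linarith [ht.le]
    have hc16' : 16 * (n:ℝ) ≤ c * σ := by
      rw [div_le_iff₀ hσ] at hc16; linarith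
    have hcV : 16 * (n:ℝ) * V / σ ≤ c := by rw [hbdef] at hbc; linarith [ht.le]
    have hcV' : 16 * (n:ℝ) * V ≤ c * σ := by
      rw [div_le_iff₀ hσ] at hcV; linarith
    -- bounds on ξstar c
    have hsq : Real.sqrt (c^2 * σ^2 + 4*σ) ≤ c * σ + 2 * Real.sqrt σ := by
      have h : c^2 * σ^2 + 4*σ ≤ (c * σ + 2 * Real.sqrt σ)^2 := by
        nlinarith [hr2, hr.le, mul_nonneg hc0.le hσ.le, Real.sqrt_nonneg σ]
      calc Real.sqrt (c^2 * σ^2 + 4*σ) ≤ Real.sqrt ((c * σ + 2 * Real.sqrt σ)^2) :=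
            Real.sqrt_le_sqrt h
        _ = c * σ + 2 * Real.sqrt σ := Real.sqrt_sq (by positivity)
    have hξlb : c * σ / 2 ≤ ξstar c := by
      rw [hξ c]
      have h : c * σ ≤ Real.sqrt (c^2 * σ^2 + 4*σ) := by
        rw [Real.le_sqrt (by positivity) (by positivity)]
        nlinarith [hσ.le]
      linarith
    have hξub : ξstar c ≤ 3 * c * σ / 4 := by
      rw [hξ c]
      have h2r : 2 * Real.sqrt σ ≤ c * σ := by
        nlinarith [hcr, hr2, hr.le]
      linarith [hsq]
    -- the exponent bound
    have hE : c^2 * σ / 8 ≤ c * ξstar c - (ξstar c)^2 / σ := by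
      have key : c^2 * σ^2 / 8 ≤ ξstar c * (c * σ - ξstar c) := by
        nlinarith [hξlb, hξub, mul_nonneg hc0.le hσ.le]
      have hfact : c * ξstar c - (ξstar c)^2 / σ = ξstar c * (c * σ - ξstar c) / σ := by
        field_simp
      rw [hfact, le_div_iff₀ hσ]
      calc c^2 * σ / 8 * σ = c^2 * σ^2 / 8 := by ring
        _ ≤ ξstar c * (c * σ - ξstar c) := key
    have hcξ1 : 1 ≤ c * ξstar c := by
      have hcc : 2/σ ≤ c^2 := by
        have := Real.sq_sqrt (le_of_lt (show (0:ℝ) < 2/σ by positivity))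
        nlinarith [hc2σ, Real.sqrt_nonneg (2/σ)]
      have : 2 ≤ c^2 * σ := by rw [div_le_iff₀ hσ] at hcc; linarith
      nlinarith [hξlb, hc0.le]
    have hMlarge : Real.exp (c^2 * σ / 8) ≤ M c := by
      rw [hM2 c htc]
      have h1 : (1:ℝ) ≤ Real.sqrt (c * ξstar c) := Real.one_le_sqrt.mpr hcξ1
      calc Real.exp (c^2 * σ / 8) ≤ Real.exp (c * ξstar c - (ξstar c)^2 / σ) :=
            Real.exp_le_exp.mpr hE
        _ ≤ Real.sqrt (c * ξstar c) * Real.exp (c * ξstar c - (ξstar c)^2 / σ) :=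
            le_mul_of_one_le_left (Real.exp_pos _).le h1
    -- now assemble
    rw [hMN c]
    have hstep1 : Real.exp (c^2 * σ / 16) ≤
        (1 / Real.log 2 + 2 * Real.sqrt 3 * M c) ^ ((1:ℝ)/2) := by
      have h1 : Real.exp (c^2 * σ / 8) ≤ 1 / Real.log 2 + 2 * Real.sqrt 3 * M c := by
        have h2 : Real.exp (c^2 * σ / 8) ≤ M c := hMlarge
        nlinarith [hB1, hMpos c hc0, (Real.exp_pos (c^2*σ/8)).le, hA.le]
      calc Real.exp (c^2 * σ / 16) = (Real.exp (c^2 * σ / 8)) ^ ((1:ℝ)/2) := by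
            rw [← Real.exp_mul]; ring_nf
        _ ≤ _ := Real.rpow_le_rpow (Real.exp_pos _).le h1 (by norm_num)
    have hstep2 : c ^ (-(n:ℝ)) ≤ c ^ (-(1:ℝ)/2 - l) := by
      apply Real.rpow_le_rpow_of_exponent_le hc1
      rw [hndef]; push_cast; linarith
    have hchain : (c:ℝ) ^ (-(n:ℝ)) * Real.exp (c^2 * σ / 16) ≤
        c ^ (-(1:ℝ)/2 - l) * (1 / Real.log 2 + 2 * Real.sqrt 3 * M c) ^ ((1:ℝ)/2) := by
      apply mul_le_mul hstep2 hstep1 (Real.exp_pos _).le (Real.rpow_nonneg hc0.le _)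
    -- finally, the explicit lower bound  V ≤ c^(-n) * exp (c²σ/16)
    have hfinal : V ≤ c ^ (-(n:ℝ)) * Real.exp (c^2 * σ / 16) := by
      have hx : (0:ℝ) ≤ c^2 * σ / 16 := by positivity
      have hexpand : Real.exp (c^2 * σ / 16) = Real.exp (c^2 * σ / (16 * n)) ^ n := by
        rw [← Real.exp_nat_mul]
        congr 1
        field_simp
      have hpow : (c^2 * σ / (16 * n)) ^ n ≤ Real.exp (c^2 * σ / (16 * n)) ^ n := by
        apply pow_le_pow_left₀ (by positivity)
        linarith [Real.add_one_le_exp (c^2 * σ / (16 * (n:ℝ)))]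
      have hrn : c ^ (-(n:ℝ)) = (c ^ n)⁻¹ := by
        rw [Real.rpow_neg hc0.le, Real.rpow_natCast]
      rw [hrn, hexpand]
      have hsplit : (c^2 * σ / (16 * n)) ^ n = c ^ n * (c * σ / (16 * n)) ^ n := by
        rw [← mul_pow]
        congr 1
        field_simp
      have h1 : (1:ℝ) ≤ c * σ / (16 * n) := by
        rw [le_div_iff₀ (by positivity)]
        linarith [hc16']
      have h2 : V ≤ c * σ / (16 * n) := by
        rw [le_div_iff₀ (by positivity)]
        linarith [hcV']
      have h3 : V ≤ (c * σ / (16 * n)) ^ n := le_trans h2 (le_self_pow₀ h1 (by positivity))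
      calc V ≤ (c * σ / (16 * n)) ^ n := h3
        _ = (c ^ n)⁻¹ * (c ^ n * (c * σ / (16 * n)) ^ n) := by
            rw [← mul_assoc, inv_mul_cancel₀ (by positivity), one_mul]
        _ = (c ^ n)⁻¹ * (c^2 * σ / (16 * n)) ^ n := by rw [hsplit]
        _ ≤ (c ^ n)⁻¹ * Real.exp (c^2 * σ / (16 * n)) ^ n := by
            apply mul_le_mul_of_nonneg_left hpow (by positivity)
    linarith [hchain, hfinal]
  -- put everything together
  have hab : a ≤ b := le_trans hat hbt.le
  obtain ⟨c₀, hc₀mem, hc₀min⟩ :=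
    (isCompact_Icc (a := a) (b := b)).exists_isMinOn (Set.nonempty_Icc.mpr hab)
      (hcMN.mono (fun x hx => lt_of_lt_of_le ha hx.1))
  refine ⟨c₀, lt_of_lt_of_le ha hc₀mem.1, ?_⟩
  intro c hc
  have htmem : t ∈ Set.Icc a b := ⟨hat, hbt.le⟩
  rcases lt_or_ge c a with hca | hca
  · calc MN c₀ ≤ MN t := hc₀min htmem
      _ = V := rfl
      _ ≤ MN c := hsmall c hc hca.le
  · rcases le_or_gt c b with hcb | hcb
    · exact hc₀min ⟨hca, hcb⟩
    · calc MN c₀ ≤ MN t := hc₀min htmem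
        _ = V := rfl
        _ ≤ MN c := hlarge c hcb.le
end

section
/- Let n ≥ 1 be an integer, β > 0 a real number, σ > 0, and l ≥ 1 an integer, and suppose 1 + β − n − 4l < 0. Define ξ*(c) = (cσ + √(c²σ² + 4σ(1+β+n)))/4 and MN(c) = c^{(1+β−n−4l)/4} · ( ξ*(c)^{(1+β+n)/2} · exp(c·ξ*(c)) / exp(ξ*(c)²/σ) )^{1/2} for c > 0. Then MN attains a global minimum on (0, ∞); that is, there exists c₀ > 0 with MN(c₀) ≤ MN(c) for all c > 0. -/
/-!
After simplification, `MN c = c ^ E * P c` with `E = (1 + β - n - 4l)/4 < 0` and a continuous,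
positive profile `P`. Near `0` the factor `c ^ E` blows up, while for large `c` the profile grows
like `exp (σ c / 8)`, which beats any power of `c`. A continuous function on `(0, ∞)` tending to
`+∞` at both ends attains its minimum; transport along `exp` to apply the extreme value theorem on `ℝ`.
-/

open Real Filter Set Topology

theorem exists_forall_le_of_tendsto_nhdsGT_zero_of_tendsto_atTop {α : Type*} [LinearOrder α]
    [TopologicalSpace α] [ClosedIicTopology α] {f : ℝ → α} (hf : ContinuousOn f (Ioi 0))
    (h_zero : Tendsto f (𝓝[>] 0) atTop) (h_top : Tendsto f atTop atTop) :
    ∃ c₀, 0 < c₀ ∧ ∀ c, 0 < c → f c₀ ≤ f c := by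
  have hcont : Continuous (f ∘ exp) := hf.comp_continuous continuous_exp exp_pos
  have hlim : Tendsto (f ∘ exp) (cocompact ℝ) atTop := by
    rw [cocompact_eq_atBot_atTop]
    exact (h_zero.comp tendsto_exp_atBot_nhdsGT).sup (h_top.comp tendsto_exp_atTop)
  obtain ⟨t₀, ht₀⟩ := hcont.exists_forall_le hlim
  refine ⟨exp t₀, exp_pos t₀, fun c hc => ?_⟩
  simpa [exp_log hc] using ht₀ (log c)

/-- `ξ*(c)` with `A = 1 + β + n`: the positive root of `2ξ² - cσξ - σA/2 = 0`, i.e. the critical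
point of `ξ ↦ (A/2) log ξ + cξ - ξ²/σ`. -/
noncomputable def optXi (σ A c : ℝ) : ℝ :=
  (c * σ + √(c ^ 2 * σ ^ 2 + 4 * σ * A)) / 4

noncomputable def mnProfile (σ A c : ℝ) : ℝ :=
  optXi σ A c ^ (A / 4) * exp (c * optXi σ A c / 4 - A / 8)

section

variable {σ A : ℝ}

theorem continuous_optXi : Continuous (optXi σ A) := by
  unfold optXi
  fun_prop

theorem optXi_pos (hσ : 0 < σ) (hA : 0 < A) (c : ℝ) : 0 < optXi σ A c := by
  have : -(c * σ) < √(c ^ 2 * σ ^ 2 + 4 * σ * A) :=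
    lt_sqrt_of_sq_lt (by nlinarith [mul_pos hσ hA])
  unfold optXi
  linarith

theorem mul_div_two_le_optXi (hσA : 0 ≤ σ * A) (c : ℝ) : c * σ / 2 ≤ optXi σ A c := by
  have : c * σ ≤ √(c ^ 2 * σ ^ 2 + 4 * σ * A) := le_sqrt_of_sq_le (by nlinarith)
  unfold optXi
  linarith

theorem optXi_sq_div (hσ : 0 < σ) (hA : 0 ≤ A) (c : ℝ) :
    optXi σ A c ^ 2 / σ = c * optXi σ A c / 2 + A / 4 := by
  have hsq := sq_sqrt (show 0 ≤ c ^ 2 * σ ^ 2 + 4 * σ * A by positivity)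
  rw [optXi, div_eq_iff hσ.ne']
  linear_combination hsq / 16

theorem rpow_half_eq_mnProfile (hσ : 0 < σ) (hA : 0 < A) (c : ℝ) :
    (optXi σ A c ^ (A / 2) * exp (c * optXi σ A c) / exp (optXi σ A c ^ 2 / σ)) ^ (1 / 2 : ℝ)
      = mnProfile σ A c := by
  have hξ := optXi_pos hσ hA c
  rw [mul_div_assoc, ← exp_sub, optXi_sq_div hσ hA.le, mul_rpow (by positivity) (exp_pos _).le,
    ← rpow_mul hξ.le, ← exp_mul, mnProfile]
  ring_nf

theorem continuous_mnProfile (hσ : 0 < σ) (hA : 0 < A) : Continuous (mnProfile σ A) := by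
  have hξ := continuous_optXi (σ := σ) (A := A)
  exact (hξ.rpow_const fun c => Or.inl (optXi_pos hσ hA c).ne').mul (by fun_prop)

theorem mnProfile_pos (hσ : 0 < σ) (hA : 0 < A) (c : ℝ) : 0 < mnProfile σ A c := by
  have := optXi_pos hσ hA c
  unfold mnProfile
  positivity

theorem exp_le_mnProfile (hσ : 0 < σ) (hA : 0 < A) {c : ℝ} (hc : 1 ≤ c) :
    (σ / 2) ^ (A / 4) * exp (-(A / 8)) * exp (σ / 8 * c) ≤ mnProfile σ A c := by
  have hξ : c * σ / 2 ≤ optXi σ A c := mul_div_two_le_optXi (mul_pos hσ hA).le c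
  have hξ_ge : σ / 2 ≤ optXi σ A c := by nlinarith
  have := optXi_pos hσ hA c
  rw [mul_assoc, ← exp_add, mnProfile]
  gcongr
  nlinarith

theorem tendsto_rpow_mul_mnProfile_nhdsGT_zero (hσ : 0 < σ) (hA : 0 < A) {E : ℝ} (hE : E < 0) :
    Tendsto (fun c => c ^ E * mnProfile σ A c) (𝓝[>] 0) atTop :=
  (tendsto_rpow_neg_nhdsGT_zero hE).atTop_mul_pos (mnProfile_pos hσ hA 0)
    ((continuous_mnProfile hσ hA).tendsto 0 |>.mono_left nhdsWithin_le_nhds)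

theorem tendsto_rpow_mul_mnProfile_atTop (hσ : 0 < σ) (hA : 0 < A) (E : ℝ) :
    Tendsto (fun c => c ^ E * mnProfile σ A c) atTop atTop := by
  set K := (σ / 2) ^ (A / 4) * exp (-(A / 8))
  refine tendsto_atTop_mono' _ ?_
    ((tendsto_exp_mul_div_rpow_atTop (-E) (σ / 8) (by positivity)).const_mul_atTop
      (by positivity : 0 < K))
  filter_upwards [eventually_ge_atTop 1] with c hc
  have hc₀ : 0 < c := by linarith
  calc K * (exp (σ / 8 * c) / c ^ (-E)) = c ^ E * (K * exp (σ / 8 * c)) := by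
        rw [rpow_neg hc₀.le, div_inv_eq_mul]
        ring
    _ ≤ c ^ E * mnProfile σ A c := by gcongr; exact exp_le_mnProfile hσ hA hc

end

theorem MN_case3_attains_min_general (n : ℕ) (β : ℝ) (hβ : 0 < β)
    (σ : ℝ) (hσ : 0 < σ) (l : ℕ)
    (hexp : 1 + β - n - 4 * l < 0)
    (ξstar : ℝ → ℝ)
    (hξ : ∀ c : ℝ, ξstar c =
      (c * σ + Real.sqrt (c ^ 2 * σ ^ 2 + 4 * σ * (1 + β + n))) / 4)
    (MN : ℝ → ℝ)
    (hMN : ∀ c : ℝ, MN c =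
      c ^ ((1 + β - n - 4 * l) / 4) *
        ((ξstar c) ^ ((1 + β + (n : ℝ)) / 2) * Real.exp (c * ξstar c) /
          Real.exp ((ξstar c) ^ 2 / σ)) ^ ((1 : ℝ) / 2)) :
    ∃ c₀ : ℝ, 0 < c₀ ∧ ∀ c : ℝ, 0 < c → MN c₀ ≤ MN c := by
  have hA : (0 : ℝ) < 1 + β + n := by positivity
  have hE : ((1 : ℝ) + β - n - 4 * l) / 4 < 0 := by linarith
  obtain rfl : ξstar = optXi σ (1 + β + n) := funext hξ
  obtain rfl : MN = fun c => c ^ ((1 + β - n - 4 * l) / 4) * mnProfile σ (1 + β + n) c :=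
    funext fun c => by rw [hMN, rpow_half_eq_mnProfile hσ hA]
  exact exists_forall_le_of_tendsto_nhdsGT_zero_of_tendsto_atTop
    (continuousOn_id.rpow_const (fun c hc => Or.inl (ne_of_gt hc)) |>.mul
      (continuous_mnProfile hσ hA).continuousOn)
    (tendsto_rpow_mul_mnProfile_nhdsGT_zero hσ hA hE) (tendsto_rpow_mul_mnProfile_atTop hσ hA _)

/-- Case 3 (β > 0, 1 + β - n - 4l < 0): the MN function attains a global minimum on `(0, ∞)`. -/
theorem MN_case3_attains_min (n : ℕ) (hn : 1 ≤ n) (β : ℝ) (hβ : 0 < β)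
    (σ : ℝ) (hσ : 0 < σ) (l : ℕ) (hl : 1 ≤ l)
    (hexp : 1 + β - n - 4 * l < 0)
    (ξstar : ℝ → ℝ)
    (hξ : ∀ c : ℝ, ξstar c =
      (c * σ + Real.sqrt (c ^ 2 * σ ^ 2 + 4 * σ * (1 + β + n))) / 4)
    (MN : ℝ → ℝ)
    (hMN : ∀ c : ℝ, MN c =
      c ^ ((1 + β - n - 4 * l) / 4) *
        ((ξstar c) ^ ((1 + β + (n : ℝ)) / 2) * Real.exp (c * ξstar c) /
          Real.exp ((ξstar c) ^ 2 / σ)) ^ ((1 : ℝ) / 2)) :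
    ∃ c₀ : ℝ, 0 < c₀ ∧ ∀ c : ℝ, 0 < c → MN c₀ ≤ MN c :=
  MN_case3_attains_min_general n β hβ σ hσ l hexp ξstar hξ MN hMN
end
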